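/- Let n ≥ 1 be an integer and let f ∈ A(𝔻) be such that f^(k) ∈ A(𝔻) for every 1 ≤ k ≤ n. Then for every 1 ≤ k ≤ n the divided difference f^[k] : 𝔻̄^(k+1) → ℂ belongs to A(𝔻^(k+1)), i.e. it is the uniform limit on 𝔻̄^(k+1) of (restrictions of) polynomials in k+1 complex variables; moreover there is a constant c_k depending only on k such that sup over 𝔻̄^(k+1) of |f^[k]| ≤ c_k · sup over 𝕋 of |f^(k)|. -/

import Mathlib

open MeasureTheory Filter Metric Matrix
open scoped InnerProductSpace Topology

noncomputable section

/-- The closed unit disk in `ℂ`. -/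
def unitDisk : Set ℂ := Metric.closedBall 0 1

/-- The unit circle in `ℂ`. -/
def unitCircleSet : Set ℂ := Metric.sphere 0 1

section Hilbert

variable {H : Type*} [NormedAddCommGroup H] [InnerProductSpace ℂ H] [CompleteSpace H]

/-- A bounded operator is a contraction if its operator norm is at most `1`. -/
def IsContraction (T : H →L[ℂ] H) : Prop := ‖T‖ ≤ 1

/-- The quantities over finite orthonormal systems whose supremum is the Schatten `p`-norm. -/
def schattenBounds (p : ℝ) (T : H →L[ℂ] H) : Set ℝ :=
  { r | ∃ (m : ℕ) (u v : Fin m → H), Orthonormal ℂ u ∧ Orthonormal ℂ v ∧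
      r = (∑ i, ‖(⟪v i, T (u i)⟫_ℂ)‖ ^ p) ^ (1/p) }

/-- Membership in the Schatten `p`-class `S^p(H)` (`1 ≤ p < ∞`). -/
def MemSchatten (p : ℝ) (T : H →L[ℂ] H) : Prop := BddAbove (schattenBounds p T)

/-- The Schatten `p`-norm `‖T‖_p` (`1 ≤ p < ∞`). -/
def schattenNorm (p : ℝ) (T : H →L[ℂ] H) : ℝ := sSup (schattenBounds p T)

/-- The trace, computed in a fixed Hilbert basis.  For trace-class operators this is the
(basis independent) trace. -/
def opTrace (T : H →L[ℂ] H) : ℂ :=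
  ∑' i : (exists_hilbertBasis ℂ H).choose,
    ⟪(exists_hilbertBasis ℂ H).choose_spec.choose i,
      T ((exists_hilbertBasis ℂ H).choose_spec.choose i)⟫_ℂ

/-- Differentiability of an operator-valued path in the Schatten `p`-norm, within a set. -/
def HasSchattenDerivWithinAt (p : ℝ) (φ : ℝ → H →L[ℂ] H) (D : H →L[ℂ] H)
    (s : Set ℝ) (t : ℝ) : Prop :=
  Filter.Tendsto (fun u : ℝ => schattenNorm p ((u - t)⁻¹ • (φ u - φ t) - D))
    (nhdsWithin t (s \ {t})) (nhds 0)

/-- `Ds` is a chain of `n` successive derivatives (in the Schatten `p`-norm) along `s`. -/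
def SchattenDerivChain (p : ℝ) (Ds : ℕ → ℝ → H →L[ℂ] H) (s : Set ℝ) (n : ℕ) : Prop :=
  ∀ m < n, ∀ t ∈ s, HasSchattenDerivWithinAt p (Ds m) (Ds (m+1) t) s t

/-- A finite rank orthogonal projection. -/
def IsFinRankProjection (P : H →L[ℂ] H) : Prop :=
  IsSelfAdjoint P ∧ IsIdempotentElem P ∧ FiniteDimensional ℂ (LinearMap.range P.toLinearMap)

/-- `P` is a sequence of polynomials converging to `f` uniformly on the closed unit disk. -/
def PolyApproxOnDisk (f : ℂ → ℂ) (P : ℕ → Polynomial ℂ) : Prop :=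
  TendstoUniformlyOn (fun j z => (P j).eval z) f Filter.atTop unitDisk

/-- The functional calculus `f(T)` of a contraction `T` for `f` in the disk algebra:
the common limit of `P j (T)` over all sequences of polynomials converging to `f`
uniformly on the closed unit disk (well defined by von Neumann's inequality). -/
def diskFC (f : ℂ → ℂ) (T : H →L[ℂ] H) : H →L[ℂ] H := by
  classical
  exact if h : ∃ A : H →L[ℂ] H, (∃ P, PolyApproxOnDisk f P) ∧
      ∀ P, PolyApproxOnDisk f P →
        Filter.Tendsto (fun j => Polynomial.aeval T (P j)) Filter.atTop (nhds A)
    then h.choose else 0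

/-- The functional calculus `f(A)` of a bounded selfadjoint operator `A`, for `f : ℝ → ℂ`. -/
def saFC (f : ℝ → ℂ) (A : H →L[ℂ] H) : H →L[ℂ] H := cfc (fun z : ℂ => f z.re) A

/-- The functional calculus `f(A)` of a normal (e.g. unitary) operator `A`. -/
def nFC (f : ℂ → ℂ) (A : H →L[ℂ] H) : H →L[ℂ] H := cfc f A

/-- The path `s ↦ e^{isA}`. -/
def expItA (A : H →L[ℂ] H) (s : ℝ) : H →L[ℂ] H :=
  NormedSpace.exp ((Complex.I * (s : ℂ)) • A)

/-- Semi-spectral measure of a contraction `T`: a positive normalized operator-valued measure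
on the unit circle whose analytic moments are the powers of `T`. -/
def IsSemiSpectralMeasure (T : H →L[ℂ] H) (ℰ : Set ℂ → (H →L[ℂ] H)) : Prop :=
  ℰ Set.univ = 1 ∧ ℰ ∅ = 0 ∧ (∀ Δ, (ℰ Δ).IsPositive) ∧
  ∀ x : H, ∃ μ : Measure ℂ, IsFiniteMeasure μ ∧ μ (unitCircleSet)ᶜ = 0 ∧
    (∀ Δ : Set ℂ, MeasurableSet Δ → (μ Δ).toReal = (⟪x, ℰ Δ x⟫_ℂ).re) ∧
    ∀ m : ℕ, ⟪x, (T ^ m) x⟫_ℂ = ∫ z, z ^ m ∂μ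

end Hilbert

/-- Fourier coefficients of a function on the unit circle. -/
def circleFourierCoeff (f : ℂ → ℂ) (k : ℤ) : ℂ :=
  (2 * Real.pi : ℝ)⁻¹ •
    ∫ t in Set.Ioc (0:ℝ) (2 * Real.pi),
      f (Complex.exp (Complex.I * t)) * Complex.exp (-(Complex.I * k * t))

/-- `f(T)` for a contraction `T`, via the absolutely convergent Fourier series of `f`. -/
noncomputable def fourierFC {H : Type*} [NormedAddCommGroup H] [InnerProductSpace ℂ H]
    [CompleteSpace H] (f : ℂ → ℂ) (T : H →L[ℂ] H) : H →L[ℂ] H :=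
  (∑' k : ℕ, circleFourierCoeff f k • T ^ k) +
    ∑' k : ℕ, circleFourierCoeff f (-(k+1 : ℕ) : ℤ) • (ContinuousLinearMap.adjoint T) ^ (k+1)

/-- One step of the recursive definition of divided differences, over a subset `S ⊆ ℂ`:
`ψ(λ₀,…,λ_{m+1}) = lim_{λ → λ_{m+1}} (φ(λ₀,…,λ_{m-1},λ) - φ(λ₀,…,λ_{m-1},λ_m))/(λ - λ_m)`. -/
def DDStep (S : Set ℂ) (m : ℕ) (φ : (Fin (m+1) → ℂ) → ℂ) (ψ : (Fin (m+2) → ℂ) → ℂ) : Prop :=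
  ∀ v : Fin (m+2) → ℂ, (∀ i, v i ∈ S) →
    Filter.Tendsto
      (fun lam : ℂ =>
        (φ (Fin.snoc (fun i : Fin m => v i.castSucc.castSucc) lam) -
          φ (Fin.snoc (fun i : Fin m => v i.castSucc.castSucc) (v ((Fin.last m).castSucc)))) /
          (lam - v ((Fin.last m).castSucc)))
      (nhdsWithin (v (Fin.last (m+1))) (S \ {v ((Fin.last m).castSucc)}))
      (nhds (ψ v))

/-- `φ` is the `n`-th divided difference `f^[n]` of `f` over `S ⊆ ℂ`. -/
def IsDivDiff (S : Set ℂ) (f : ℂ → ℂ) : (n : ℕ) → ((Fin (n+1) → ℂ) → ℂ) → Prop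
  | 0 => fun φ => ∀ v : Fin 1 → ℂ, (∀ i, v i ∈ S) → φ v = f (v 0)
  | (m+1) => fun ψ => ∃ φ : (Fin (m+1) → ℂ) → ℂ, IsDivDiff S f m φ ∧ DDStep S m φ ψ

/-- One step of the recursive definition of divided differences on the real line. -/
def DDStepR (m : ℕ) (φ : (Fin (m+1) → ℝ) → ℂ) (ψ : (Fin (m+2) → ℝ) → ℂ) : Prop :=
  ∀ v : Fin (m+2) → ℝ,
    Filter.Tendsto
      (fun lam : ℝ =>
        (φ (Fin.snoc (fun i : Fin m => v i.castSucc.castSucc) lam) -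
          φ (Fin.snoc (fun i : Fin m => v i.castSucc.castSucc) (v ((Fin.last m).castSucc)))) /
          ((lam : ℂ) - (v ((Fin.last m).castSucc) : ℂ)))
      (nhdsWithin (v (Fin.last (m+1))) {v ((Fin.last m).castSucc)}ᶜ)
      (nhds (ψ v))

/-- `φ` is the `n`-th divided difference `f^[n]` of `f : ℝ → ℂ`. -/
def IsDivDiffR (f : ℝ → ℂ) : (n : ℕ) → ((Fin (n+1) → ℝ) → ℂ) → Prop
  | 0 => fun φ => ∀ v : Fin 1 → ℝ, φ v = f (v 0)
  | (m+1) => fun ψ => ∃ φ : (Fin (m+1) → ℝ) → ℂ, IsDivDiffR f m φ ∧ DDStepR m φ ψ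

/-- Membership in the disk algebra `A(𝔻)`: continuous on the closed unit disk and
holomorphic on the open unit disk. -/
def MemDiskAlg (f : ℂ → ℂ) : Prop :=
  ContinuousOn f unitDisk ∧ DifferentiableOn ℂ f (Metric.ball 0 1)

/-- `D` is a chain of successive derivatives on the open unit disk, of length `n`. -/
def DiskDerivChain (D : ℕ → ℂ → ℂ) (n : ℕ) : Prop :=
  ∀ m < n, ∀ z ∈ Metric.ball (0:ℂ) 1, HasDerivAt (D m) (D (m+1) z) z

/-- `D` is a chain of successive derivatives along the unit circle, of length `n`. -/
def CircleDerivChain (D : ℕ → ℂ → ℂ) (n : ℕ) : Prop :=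
  ∀ m < n, ∀ z ∈ unitCircleSet,
    Filter.Tendsto (fun w => (D m w - D m z) / (w - z))
      (nhdsWithin z (unitCircleSet \ {z})) (nhds (D (m+1) z))

/-- A fixed separable infinite-dimensional complex Hilbert space, `ℓ²(ℕ)`. -/
abbrev ellTwo : Type := lp (fun _ : ℕ => ℂ) 2

/-- A Hilbert space factorization `φ(t₁,t₂,t₃) = ⟨a(t₁,t₂), b(t₂,t₃)⟩` on `S³`, `S ⊆ ℂ`,
through a separable Hilbert space, with `a, b` bounded and (weakly, equivalently Borel)
measurable. -/
def HilbertFactorization2C (S : Set ℂ) (φ : (Fin 3 → ℂ) → ℂ) : Prop :=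
  ∃ a b : ℂ → ℂ → ellTwo,
    (∃ C : ℝ, ∀ x y : ℂ, ‖a x y‖ ≤ C ∧ ‖b x y‖ ≤ C) ∧
    (∀ c : ellTwo, Measurable fun q : ℂ × ℂ => (⟪c, a q.1 q.2⟫_ℂ)) ∧
    (∀ c : ellTwo, Measurable fun q : ℂ × ℂ => (⟪c, b q.1 q.2⟫_ℂ)) ∧
    ∀ t₁ ∈ S, ∀ t₂ ∈ S, ∀ t₃ ∈ S, φ ![t₁, t₂, t₃] = ⟪a t₁ t₂, b t₂ t₃⟫_ℂ

/-- A Hilbert space factorization of a function on `ℝ³`, through a separable Hilbert space. -/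
def HilbertFactorization2R (φ : (Fin 3 → ℝ) → ℂ) : Prop :=
  ∃ a b : ℝ → ℝ → ellTwo,
    (∃ C : ℝ, ∀ x y : ℝ, ‖a x y‖ ≤ C ∧ ‖b x y‖ ≤ C) ∧
    (∀ c : ellTwo, Measurable fun q : ℝ × ℝ => (⟪c, a q.1 q.2⟫_ℂ)) ∧
    (∀ c : ellTwo, Measurable fun q : ℝ × ℝ => (⟪c, b q.1 q.2⟫_ℂ)) ∧
    ∀ t₁ t₂ t₃ : ℝ, φ ![t₁, t₂, t₃] = ⟪a t₁ t₂, b t₂ t₃⟫_ℂ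

/-- The arc `{e^{it} : 0 ≤ t ≤ θ}` of the unit circle. -/
def circleArc (θ : ℝ) : Set ℂ :=
  {z : ℂ | ∃ t : ℝ, 0 ≤ t ∧ t ≤ θ ∧ z = Complex.exp (Complex.I * t)}

end


noncomputable section DDAux
open Metric MeasureTheory intervalIntegral

/-- radial retraction onto the closed unit disk -/
def ddRetr (z : ℂ) : ℂ := (max 1 ‖z‖)⁻¹ • z

lemma ddRetr_continuous : Continuous ddRetr := by
  refine Continuous.smul (f := fun z : ℂ => (max 1 ‖z‖)⁻¹) ?_ continuous_id
  exact (continuous_const.max continuous_norm).inv₀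
    (fun z => ne_of_gt (lt_of_lt_of_le one_pos (le_max_left _ _)))

lemma ddRetr_norm_le (z : ℂ) : ‖ddRetr z‖ ≤ 1 := by
  have h1 : (0:ℝ) < max 1 ‖z‖ := lt_of_lt_of_le one_pos (le_max_left _ _)
  rw [ddRetr, norm_smul, norm_inv, Real.norm_eq_abs, abs_of_pos h1]
  rw [inv_mul_le_one₀ h1]
  exact le_max_right _ _

lemma ddRetr_eq {z : ℂ} (h : ‖z‖ ≤ 1) : ddRetr z = z := by
  rw [ddRetr, max_eq_left h, inv_one, one_smul]

lemma dd_seg_norm_le {R : ℝ} {a b : ℂ} (ha : ‖a‖ ≤ R) (hb : ‖b‖ ≤ R) {t : ℝ}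
    (h0 : 0 ≤ t) (h1 : t ≤ 1) : ‖a + (t:ℂ) * (b - a)‖ ≤ R := by
  have he : a + (t:ℂ) * (b - a) = ((1 - t : ℝ) : ℂ) * a + (t:ℂ) * b := by
    push_cast; ring
  rw [he]
  calc ‖((1 - t : ℝ) : ℂ) * a + (t:ℂ) * b‖ ≤ ‖((1-t:ℝ):ℂ) * a‖ + ‖(t:ℂ) * b‖ := norm_add_le _ _
    _ ≤ (1 - t) * R + t * R := by
        rw [norm_mul, norm_mul, Complex.norm_real, Complex.norm_real,
          Real.norm_eq_abs, Real.norm_eq_abs, abs_of_nonneg (by linarith), abs_of_nonneg h0]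
        gcongr <;> linarith [norm_nonneg a, norm_nonneg b]
    _ = R := by ring

/-- iterated integral operator -/
def ddI : (j : ℕ) → (ℂ → ℂ) → (Fin (j+1) → ℂ) → ℂ
  | 0, g, x => g (x 0)
  | (j+1), g, x => ∫ t in (0:ℝ)..1,
      ((t:ℂ)^j) * ddI j g (fun i : Fin (j+1) => x 0 + (t:ℂ) * (x i.succ - x 0))

lemma ddI_continuous {g : ℂ → ℂ} (hg : Continuous g) (j : ℕ) :
    Continuous (ddI j g) := by
  induction j with
  | zero => exact hg.comp (continuous_apply 0)
  | succ j ih =>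
    have hF : Continuous (Function.uncurry fun (x : Fin (j+2) → ℂ) (t : ℝ) =>
        ((t:ℂ)^j) * ddI j g (fun i : Fin (j+1) => x 0 + (t:ℂ) * (x i.succ - x 0))) := by
      apply Continuous.mul
      · fun_prop
      · apply ih.comp
        apply continuous_pi
        intro i
        fun_prop
    exact intervalIntegral.continuous_parametric_intervalIntegral_of_continuous' hF 0 1

lemma ddI_norm_le {g : ℂ → ℂ} {R B : ℝ} (hg : ∀ z : ℂ, ‖z‖ ≤ R → ‖g z‖ ≤ B) :
    ∀ (j : ℕ) (x : Fin (j+1) → ℂ), (∀ i, ‖x i‖ ≤ R) → ‖ddI j g x‖ ≤ B := by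
  intro j
  induction j with
  | zero => intro x hx; exact hg _ (hx 0)
  | succ j ih =>
    intro x hx
    have key : ‖ddI (j+1) g x‖ ≤ B * |(1:ℝ) - 0| := by
      apply intervalIntegral.norm_integral_le_of_norm_le_const
      intro t ht
      rw [Set.uIoc_of_le (by norm_num : (0:ℝ) ≤ 1)] at ht
      have h0 : (0:ℝ) ≤ t := ht.1.le
      have h1 : t ≤ 1 := ht.2
      have hb : ∀ i : Fin (j+1), ‖x 0 + (t:ℂ) * (x i.succ - x 0)‖ ≤ R := fun i =>
        dd_seg_norm_le (hx 0) (hx i.succ) h0 h1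
      calc ‖(t:ℂ)^j * ddI j g (fun i : Fin (j+1) => x 0 + (t:ℂ) * (x i.succ - x 0))‖
          = ‖(t:ℂ)‖^j * ‖ddI j g _‖ := by rw [norm_mul, norm_pow]
        _ ≤ 1 * B := by
            apply mul_le_mul _ (ih _ hb) (norm_nonneg _) zero_le_one
            exact pow_le_one₀ (norm_nonneg _)
              (by rw [Complex.norm_real, Real.norm_eq_abs, abs_of_nonneg h0]; exact h1)
        _ = B := one_mul B
    simpa using key

lemma ddI_sub {g₁ g₂ : ℂ → ℂ} (h₁ : Continuous g₁) (h₂ : Continuous g₂) :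
    ∀ (j : ℕ) (x : Fin (j+1) → ℂ),
      ddI j (fun z => g₁ z - g₂ z) x = ddI j g₁ x - ddI j g₂ x := by
  intro j
  induction j with
  | zero => intro x; rfl
  | succ j ih =>
    intro x
    have hy : ∀ (g : ℂ → ℂ), Continuous g → Continuous (fun t : ℝ =>
        (t:ℂ)^j * ddI j g (fun i : Fin (j+1) => x 0 + (t:ℂ) * (x i.succ - x 0))) := by
      intro g hgc
      apply Continuous.mul (by fun_prop)
      exact (ddI_continuous hgc j).comp (by apply continuous_pi; intro i; fun_prop)
    show (∫ t in (0:ℝ)..1, (t:ℂ)^j * ddI j (fun z => g₁ z - g₂ z)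
        (fun i : Fin (j+1) => x 0 + (t:ℂ) * (x i.succ - x 0))) = _
    rw [show (fun t : ℝ => (t:ℂ)^j * ddI j (fun z => g₁ z - g₂ z)
        (fun i : Fin (j+1) => x 0 + (t:ℂ) * (x i.succ - x 0)))
        = fun t : ℝ => ((t:ℂ)^j * ddI j g₁ (fun i : Fin (j+1) => x 0 + (t:ℂ) * (x i.succ - x 0))
          - (t:ℂ)^j * ddI j g₂ (fun i : Fin (j+1) => x 0 + (t:ℂ) * (x i.succ - x 0)))
        from funext fun t => by rw [ih]; ring]
    rw [intervalIntegral.integral_sub ((hy g₁ h₁).intervalIntegrable 0 1)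
      ((hy g₂ h₂).intervalIntegrable 0 1)]
    rfl

lemma dd_segment_ftc {g G : ℂ → ℂ} (hg : Continuous g) (hG : Continuous G)
    (hd : ∀ z ∈ ball (0:ℂ) 1, HasDerivAt G (g z) z)
    {a b : ℂ} (ha : ‖a‖ ≤ 1) (hb : ‖b‖ ≤ 1) :
    (∫ t in (0:ℝ)..1, g (a + (t:ℂ) * (b - a))) * (b - a) = G b - G a := by
  rcases eq_or_ne b a with rfl | hne
  · simp
  · have hin : ∀ t ∈ Set.Ioo (0:ℝ) 1, a + (t:ℂ) * (b - a) ∈ ball (0:ℂ) 1 := by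
      intro t ht
      have he : a + (t:ℂ) * (b - a) = (1 - t) • a + t • b := by
        simp only [Complex.real_smul]; push_cast; ring
      rw [mem_ball_zero_iff, he]
      exact norm_combo_lt_of_ne ha hb (Ne.symm hne) (by linarith [ht.2]) ht.1 (by ring)
    have hu : ∀ t : ℝ, HasDerivAt (fun s : ℝ => a + (s:ℂ) * (b - a)) (b - a) t := by
      intro t
      have h1 : HasDerivAt (fun s : ℝ => (s:ℂ)) 1 t := by
        exact Complex.ofRealCLM.hasDerivAt (x := t)
      simpa using (h1.mul_const (b - a)).const_add a
    have key : (∫ t in (0:ℝ)..1, (b - a) • g (a + (t:ℂ) * (b - a)))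
        = G (a + (1:ℝ) * (b - a)) - G (a + ((0:ℝ):ℂ) * (b - a)) := by
      apply intervalIntegral.integral_eq_sub_of_hasDeriv_right_of_le
        (f := fun t : ℝ => G (a + (t:ℂ) * (b - a))) zero_le_one
      · exact (hG.comp (by fun_prop)).continuousOn
      · intro t ht
        exact ((hd _ (hin t ht)).scomp t (hu t)).hasDerivWithinAt
      · exact (by fun_prop : Continuous fun t : ℝ => (b - a) • g (a + (t:ℂ) * (b - a))).intervalIntegrable 0 1
    simp only [smul_eq_mul] at key
    rw [intervalIntegral.integral_const_mul] at key
    rw [mul_comm]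
    rw [key]
    norm_num

/-- the affine reparametrization used in `ddI` -/
def ddY {n : ℕ} (x : Fin (n+1) → ℂ) (t : ℝ) : Fin n → ℂ :=
  fun i => x 0 + (t:ℂ) * (x i.succ - x 0)

lemma ddI_succ (j : ℕ) (g : ℂ → ℂ) (x : Fin (j+2) → ℂ) :
    ddI (j+1) g x = ∫ t in (0:ℝ)..1, ((t:ℂ)^j) * ddI j g (ddY x t) := rfl

lemma ddY_cast {m : ℕ} (x : Fin (m+3) → ℂ) (t : ℝ) :
    ddY (fun i : Fin (m+2) => x i.castSucc) t = fun i : Fin (m+1) => ddY x t i.castSucc := by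
  funext i
  simp only [ddY, Fin.succ_castSucc, Fin.castSucc_zero]

lemma ddY_snoc {m : ℕ} (x : Fin (m+3) → ℂ) (t : ℝ) :
    ddY (Fin.snoc (fun i : Fin (m+1) => x i.castSucc.castSucc) (x (Fin.last (m+2)))) t
      = Fin.snoc (fun i : Fin m => ddY x t i.castSucc.castSucc)
          (ddY x t (Fin.last (m+1))) := by
  have h0 : ((0 : Fin (m+2))) = (0 : Fin (m+1)).castSucc := rfl
  funext i
  refine Fin.lastCases ?_ ?_ i
  · rw [Fin.snoc_last]
    simp only [ddY, Fin.succ_last, h0, Fin.snoc_castSucc, Fin.snoc_last]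
    simp [Fin.castSucc_zero]
  · intro j
    rw [Fin.snoc_castSucc]
    simp only [ddY, Fin.succ_castSucc, h0, Fin.snoc_castSucc, Fin.snoc_last]
    simp [Fin.castSucc_zero]

lemma ddI_key {g G : ℂ → ℂ} (hg : Continuous g) (hG : Continuous G)
    (hd : ∀ z ∈ ball (0:ℂ) 1, HasDerivAt G (g z) z) :
    ∀ (m : ℕ) (x : Fin (m+2) → ℂ), (∀ i, ‖x i‖ ≤ 1) →
      ddI (m+1) g x * (x (Fin.last (m+1)) - x ((Fin.last m).castSucc)) =
        ddI m G (Fin.snoc (fun i : Fin m => x i.castSucc.castSucc) (x (Fin.last (m+1)))) -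
          ddI m G (fun i : Fin (m+1) => x i.castSucc) := by
  intro m
  induction m with
  | zero =>
    intro x hx
    have e1 : ddI 1 g x = ∫ t in (0:ℝ)..1, g (x 0 + (t:ℂ) * (x (Fin.last 1) - x 0)) := by
      rw [ddI_succ]
      refine intervalIntegral.integral_congr fun t ht => ?_
      have : ((0 : Fin 1)).succ = Fin.last 1 := rfl
      simp [ddI, ddY, this]
    have e2 : (Fin.last 0).castSucc = (0 : Fin 2) := rfl
    rw [e1, e2, dd_segment_ftc hg hG hd (hx 0) (hx (Fin.last 1))]
    have e3 : ddI 0 G (Fin.snoc (fun i : Fin 0 => x i.castSucc.castSucc) (x (Fin.last 1)))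
        = G (x (Fin.last 1)) := by
      have : (Fin.snoc (fun i : Fin 0 => x i.castSucc.castSucc) (x (Fin.last 1)) : Fin 1 → ℂ) 0
          = x (Fin.last 1) := by
        have h0 : (0 : Fin 1) = Fin.last 0 := rfl
        rw [h0, Fin.snoc_last]
      show G _ = _
      rw [this]
    have e4 : ddI 0 G (fun i : Fin 1 => x i.castSucc) = G (x 0) := rfl
    rw [e3, e4]
  | succ m ih =>
    intro x hx
    have hq := Fin.succ_last (m+1)
    set x1 : Fin (m+2) → ℂ :=
      Fin.snoc (fun i : Fin (m+1) => x i.castSucc.castSucc) (x (Fin.last (m+2))) with hx1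
    set x2 : Fin (m+2) → ℂ := fun i => x i.castSucc with hx2
    have hylast : ∀ t : ℝ,
        ddY x t (Fin.last (m+1)) - ddY x t ((Fin.last m).castSucc)
          = (t:ℂ) * (x (Fin.last (m+2)) - x ((Fin.last (m+1)).castSucc)) := by
      intro t
      simp only [ddY, Fin.succ_last, Fin.succ_castSucc]
      ring
    have hcont1 : Continuous fun t : ℝ => (t:ℂ)^m * ddI m G (ddY x1 t) := by
      apply Continuous.mul (by fun_prop)
      exact (ddI_continuous hG m).comp (by apply continuous_pi; intro i; simp only [ddY]; fun_prop)
    have hcont2 : Continuous fun t : ℝ => (t:ℂ)^m * ddI m G (ddY x2 t) := by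
      apply Continuous.mul (by fun_prop)
      exact (ddI_continuous hG m).comp (by apply continuous_pi; intro i; simp only [ddY]; fun_prop)
    calc ddI (m+2) g x * (x (Fin.last (m+2)) - x ((Fin.last (m+1)).castSucc))
        = ∫ t in (0:ℝ)..1, ((t:ℂ)^(m+1) * ddI (m+1) g (ddY x t))
            * (x (Fin.last (m+2)) - x ((Fin.last (m+1)).castSucc)) := by
          rw [ddI_succ, intervalIntegral.integral_mul_const]
      _ = ∫ t in (0:ℝ)..1, ((t:ℂ)^m * ddI m G (ddY x1 t) - (t:ℂ)^m * ddI m G (ddY x2 t)) := by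
          refine intervalIntegral.integral_congr fun t ht => ?_
          rw [Set.uIcc_of_le (by norm_num : (0:ℝ) ≤ 1)] at ht
          have hnorm : ∀ i, ‖ddY x t i‖ ≤ 1 := fun i =>
            dd_seg_norm_le (hx 0) (hx i.succ) ht.1 ht.2
          have hkey := ih (ddY x t) hnorm
          calc ((t:ℂ)^(m+1) * ddI (m+1) g (ddY x t))
              * (x (Fin.last (m+2)) - x ((Fin.last (m+1)).castSucc))
              = (t:ℂ)^m * (ddI (m+1) g (ddY x t) *
                 (ddY x t (Fin.last (m+1)) - ddY x t ((Fin.last m).castSucc))) := by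
                rw [hylast t]; ring
            _ = (t:ℂ)^m * ddI m G (ddY x1 t) - (t:ℂ)^m * ddI m G (ddY x2 t) := by
                rw [hkey, hx1, hx2, ddY_snoc, ddY_cast, mul_sub]
      _ = (∫ t in (0:ℝ)..1, (t:ℂ)^m * ddI m G (ddY x1 t))
            - ∫ t in (0:ℝ)..1, (t:ℂ)^m * ddI m G (ddY x2 t) :=
          intervalIntegral.integral_sub (hcont1.intervalIntegrable 0 1)
            (hcont2.intervalIntegrable 0 1)
      _ = ddI (m+1) G x1 - ddI (m+1) G x2 := by rw [ddI_succ, ddI_succ]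


lemma dd_neBot {a b : ℂ} (ha : a ∈ unitDisk) :
    (nhdsWithin a (unitDisk \ {b})).NeBot := by
  rw [← mem_closure_iff_nhdsWithin_neBot]
  have ha' : ‖a‖ ≤ 1 := by simpa [unitDisk, Metric.mem_closedBall, dist_zero_right] using ha
  have hc1 : ‖(1/2 : ℂ)‖ ≤ 1 := by norm_num
  have hc2 : ‖(-(1/2) : ℂ)‖ ≤ 1 := by norm_num
  set u : ℕ → ℂ := fun n =>
    if a + ((1/(n+1) : ℝ) : ℂ) * ((1/2 : ℂ) - a) = b
      then a + ((1/(n+1) : ℝ) : ℂ) * ((-(1/2) : ℂ) - a)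
      else a + ((1/(n+1) : ℝ) : ℂ) * ((1/2 : ℂ) - a) with hu
  have ht : ∀ n : ℕ, (0:ℝ) ≤ 1/(n+1) ∧ (1:ℝ)/(n+1) ≤ 1 := by
    intro n
    constructor
    · positivity
    · rw [div_le_one (by positivity)]
      simp [Nat.cast_nonneg]
  have hmem : ∀ n, u n ∈ unitDisk \ {b} := by
    intro n
    obtain ⟨h0, h1⟩ := ht n
    constructor
    · simp only [hu]
      split
      · simpa [unitDisk, Metric.mem_closedBall, dist_zero_right] using
          dd_seg_norm_le ha' hc2 h0 h1
      · simpa [unitDisk, Metric.mem_closedBall, dist_zero_right] using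
          dd_seg_norm_le ha' hc1 h0 h1
    · simp only [hu, Set.mem_singleton_iff]
      split_ifs with h
      · intro hcon
        have hc : ((1/(n+1) : ℝ) : ℂ) = 0 := by
          have h3 : ((1/(n+1) : ℝ) : ℂ) * ((1/2 : ℂ) - a)
              - ((1/(n+1) : ℝ) : ℂ) * ((-(1/2) : ℂ) - a) = 0 := by
            linear_combination h - hcon
          linear_combination h3
        rw [Complex.ofReal_eq_zero] at hc
        exact (by positivity : ((1:ℝ)/(n+1)) ≠ 0) hc
      · exact h
  have htend : Filter.Tendsto u Filter.atTop (nhds a) := by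
    rw [tendsto_iff_dist_tendsto_zero]
    apply squeeze_zero (fun n => dist_nonneg) (g := fun n : ℕ => 2 * (1/(n+1) : ℝ))
    · intro n
      obtain ⟨h0, h1⟩ := ht n
      have key : ∀ c : ℂ, ‖c‖ ≤ 1 → dist (a + ((1/(n+1) : ℝ) : ℂ) * (c - a)) a ≤ 2 * (1/(n+1) : ℝ) := by
        intro c hc
        rw [dist_eq_norm]
        have : a + ((1/(n+1) : ℝ) : ℂ) * (c - a) - a = ((1/(n+1) : ℝ) : ℂ) * (c - a) := by ring
        rw [this, norm_mul, Complex.norm_real, Real.norm_eq_abs, abs_of_nonneg h0, mul_comm]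
        apply mul_le_mul _ le_rfl h0 (by norm_num)
        calc ‖c - a‖ ≤ ‖c‖ + ‖a‖ := norm_sub_le _ _
          _ ≤ 2 := by linarith
      simp only [hu]
      split
      · exact key _ hc2
      · exact key _ hc1
    · have : Filter.Tendsto (fun n : ℕ => (1/(n+1) : ℝ)) Filter.atTop (nhds 0) :=
        tendsto_one_div_add_atTop_nhds_zero_nat
      simpa using this.const_mul 2
  exact mem_closure_of_tendsto htend (Filter.Eventually.of_forall hmem)

lemma dd_unique {f : ℂ → ℂ} :
    ∀ (m : ℕ) (φ₁ φ₂ : (Fin (m+1) → ℂ) → ℂ),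
      IsDivDiff unitDisk f m φ₁ → IsDivDiff unitDisk f m φ₂ →
      ∀ v : Fin (m+1) → ℂ, (∀ i, v i ∈ unitDisk) → φ₁ v = φ₂ v := by
  intro m
  induction m with
  | zero => intro φ₁ φ₂ h1 h2 v hv; rw [h1 v hv, h2 v hv]
  | succ m ih =>
    rintro ψ₁ ψ₂ ⟨φ₁, h1, hs1⟩ ⟨φ₂, h2, hs2⟩ v hv
    haveI := dd_neBot (a := v (Fin.last (m+1))) (b := v ((Fin.last m).castSucc)) (hv _)
    have heq : ∀ lam ∈ unitDisk,
        φ₁ (Fin.snoc (fun i : Fin m => v i.castSucc.castSucc) lam)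
          = φ₂ (Fin.snoc (fun i : Fin m => v i.castSucc.castSucc) lam) := by
      intro lam hlam
      apply ih _ _ h1 h2
      intro i
      refine Fin.lastCases ?_ ?_ i
      · rw [Fin.snoc_last]; exact hlam
      · intro j; rw [Fin.snoc_castSucc]; exact hv _
    refine tendsto_nhds_unique (hs1 v hv) ((hs2 v hv).congr' ?_)
    filter_upwards [self_mem_nhdsWithin] with lam hlam
    rw [heq lam hlam.1, heq _ (hv _)]

lemma dd_integral_pow_c (m : ℕ) :
    (∫ t in (0:ℝ)..1, ((t:ℂ))^m) = (((m+1 : ℕ) : ℂ))⁻¹ := by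
  have h0 : (fun t : ℝ => ((t:ℂ))^m) = fun t : ℝ => ((t^m : ℝ) : ℂ) := by
    funext t; push_cast; ring
  calc (∫ t in (0:ℝ)..1, ((t:ℂ))^m) = (((∫ t in (0:ℝ)..1, t^m) : ℝ) : ℂ) := by
        rw [h0]; exact_mod_cast RCLike.intervalIntegral_ofReal (𝕜 := ℂ) (f := fun t => t^m)
    _ = _ := by rw [integral_pow]; push_cast; norm_num

lemma dd_claim1 {k : ℕ} (P : MvPolynomial (Fin (k+1)) ℂ) (x : Fin (k+2) → ℂ) (t : ℝ) :
    MvPolynomial.eval (ddY x t) P = Polynomial.eval (t:ℂ)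
      ((MvPolynomial.aeval (fun i : Fin (k+1) =>
          Polynomial.C (MvPolynomial.X 0) +
            Polynomial.C (MvPolynomial.X i.succ - MvPolynomial.X 0) * Polynomial.X
          : Fin (k+1) → Polynomial (MvPolynomial (Fin (k+2)) ℂ)) P).map
        (MvPolynomial.eval x)) := by
  induction P using MvPolynomial.induction_on with
  | C a => simp [MvPolynomial.aeval_C, Polynomial.eval_map, Polynomial.eval₂_at_apply]
  | add p1 p2 hp1 hp2 => simp [_root_.map_add, hp1, hp2]
  | mul_X p i hp =>
    simp only [_root_.map_mul, MvPolynomial.aeval_X, Polynomial.map_mul, Polynomial.eval_mul,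
      MvPolynomial.eval_mul, hp]
    congr 1
    simp only [Polynomial.map_add, Polynomial.map_mul, Polynomial.map_C, Polynomial.map_X,
      Polynomial.eval_add, Polynomial.eval_mul, Polynomial.eval_C, Polynomial.eval_X,
      _root_.map_sub, MvPolynomial.eval_X, ddY, Polynomial.map_sub, Polynomial.eval_sub]
    ring

lemma ddI_polynomial (q : Polynomial ℂ) :
    ∀ k : ℕ, ∃ Q : MvPolynomial (Fin (k+1)) ℂ,
      ∀ x : Fin (k+1) → ℂ, ddI k (fun z => q.eval z) x = MvPolynomial.eval x Q := by
  intro k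
  induction k with
  | zero =>
    refine ⟨Polynomial.aeval (MvPolynomial.X 0) q, fun x => ?_⟩
    show q.eval (x 0) = _
    induction q using Polynomial.induction_on' with
    | add p q hp hq => simp [_root_.map_add, hp, hq]
    | monomial n a => simp [Polynomial.aeval_monomial, Polynomial.eval_monomial]
  | succ k ihQ =>
    obtain ⟨Q, hQ⟩ := ihQ
    set Y : Fin (k+1) → Polynomial (MvPolynomial (Fin (k+2)) ℂ) := fun i =>
      Polynomial.C (MvPolynomial.X 0) +
        Polynomial.C (MvPolynomial.X i.succ - MvPolynomial.X 0) * Polynomial.X with hY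
    set R : Polynomial (MvPolynomial (Fin (k+2)) ℂ) := MvPolynomial.aeval Y Q with hR
    refine ⟨(Finset.range (R.natDegree + 1)).sum
      (fun d => MvPolynomial.C ((((k+d+1 : ℕ)) : ℂ))⁻¹ * R.coeff d), fun x => ?_⟩
    have hdeg : (R.map (MvPolynomial.eval x)).natDegree < R.natDegree + 1 :=
      Nat.lt_succ_of_le Polynomial.natDegree_map_le
    calc ddI (k+1) (fun z => q.eval z) x
        = ∫ t in (0:ℝ)..1, (t:ℂ)^k * Polynomial.eval (t:ℂ) (R.map (MvPolynomial.eval x)) := by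
          rw [ddI_succ]
          refine intervalIntegral.integral_congr fun t ht => ?_
          rw [hQ, hR, dd_claim1]
      _ = ∫ t in (0:ℝ)..1, ∑ d ∈ Finset.range (R.natDegree + 1),
            (R.map (MvPolynomial.eval x)).coeff d * (t:ℂ)^(k+d) := by
          refine intervalIntegral.integral_congr fun t ht => ?_
          rw [Polynomial.eval_eq_sum_range' hdeg, Finset.mul_sum]
          refine Finset.sum_congr rfl fun d hd => ?_
          rw [pow_add]; ring
      _ = ∑ d ∈ Finset.range (R.natDegree + 1),
            (R.map (MvPolynomial.eval x)).coeff d * (((k+d+1 : ℕ) : ℂ))⁻¹ := by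
          rw [intervalIntegral.integral_finset_sum]
          · refine Finset.sum_congr rfl fun d hd => ?_
            rw [intervalIntegral.integral_const_mul, dd_integral_pow_c]
          · intro d hd
            exact ((by fun_prop :
              Continuous fun t : ℝ => (R.map (MvPolynomial.eval x)).coeff d * (t:ℂ)^(k+d))).intervalIntegrable 0 1
      _ = MvPolynomial.eval x ((Finset.range (R.natDegree + 1)).sum
            (fun d => MvPolynomial.C ((((k+d+1 : ℕ)) : ℂ))⁻¹ * R.coeff d)) := by
          rw [_root_.map_sum]
          refine Finset.sum_congr rfl fun d hd => ?_
          rw [MvPolynomial.eval_mul, MvPolynomial.eval_C, Polynomial.coeff_map]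
          ring

lemma dd_eval_scale {n : ℕ} (c : ℂ) (Q : MvPolynomial (Fin n) ℂ) (v : Fin n → ℂ) :
    MvPolynomial.eval v (MvPolynomial.bind₁ (fun i => MvPolynomial.C c * MvPolynomial.X i) Q)
      = MvPolynomial.eval (fun i => c * v i) Q := by
  induction Q using MvPolynomial.induction_on with
  | C a => simp
  | add p q hp hq => simp [_root_.map_add, hp, hq]
  | mul_X p i hp => simp [_root_.map_mul, MvPolynomial.bind₁_X_right, hp]

lemma dd_poly_approx (k : ℕ) {g : ℂ → ℂ} (hgc : Continuous g)
    (hgd : DifferentiableOn ℂ g (ball (0:ℂ) 1)) {ε : ℝ} (hε : 0 < ε) :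
    ∃ Q : MvPolynomial (Fin (k+1)) ℂ, ∀ v : Fin (k+1) → ℂ,
      (∀ i, ‖v i‖ ≤ 1) → ‖MvPolynomial.eval v Q - ddI k g v‖ < ε := by
  classical
  set K : Set (Fin (k+1) → ℂ) := Set.pi Set.univ (fun _ => closedBall (0:ℂ) 1) with hK
  have hKc : IsCompact K := isCompact_univ_pi fun _ => isCompact_closedBall _ _
  have hu := hKc.uniformContinuousOn_of_continuous (ddI_continuous hgc k).continuousOn
  rw [Metric.uniformContinuousOn_iff] at hu
  obtain ⟨δ, hδ, H⟩ := hu (ε/2) (by positivity)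
  set d : ℝ := min δ 1 / 2 with hd
  have hd0 : 0 < d := by positivity
  have hdδ : d < δ := lt_of_le_of_lt (by simp [hd]; linarith [min_le_left δ 1]) (by linarith : δ/2 < δ)
  have hd1 : d ≤ 1/2 := by simp [hd]; linarith [min_le_right δ 1]
  set r : ℝ := 1 - d with hr
  have hr0 : 0 < r := by simp [hr]; linarith
  have hr1 : r < 1 := by simp [hr]; linarith
  set r' : ℝ := 1 - (3/4)*d with hr'
  set ρ : ℝ := 1 - d/2 with hρ
  have hrr' : r < r' := by simp [hr, hr']; linarith
  have hr'ρ : r' < ρ := by simp [hr', hρ]; linarith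
  have hρ1 : ρ < 1 := by simp [hρ]; linarith
  have hρ0 : (0:ℝ) < ρ := by simp [hρ]; linarith
  have hr'0 : (0:ℝ) < r' := by simp [hr']; linarith
  set ρn : NNReal := ⟨ρ, hρ0.le⟩ with hρn
  set rn : NNReal := ⟨r', hr'0.le⟩ with hrn
  have hgd' : DifferentiableOn ℂ g (closedBall (0:ℂ) (ρn:ℝ)) :=
    hgd.mono (closedBall_subset_ball (by exact_mod_cast hρ1))
  have hps := hgd'.hasFPowerSeriesOnBall (show 0 < ρn by exact_mod_cast hρ0)
  set p := cauchyPowerSeries g 0 ρn with hp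
  have htu := hps.tendstoUniformlyOn
    (show (rn : ENNReal) < (ρn : ENNReal) by exact_mod_cast hr'ρ)
  rw [Metric.tendstoUniformlyOn_iff] at htu
  obtain ⟨N, hN⟩ := (htu (ε/2) (by positivity)).exists
  set q : Polynomial ℂ := ∑ i ∈ Finset.range N, Polynomial.C (p.coeff i) * Polynomial.X ^ i with hq
  have hqe : ∀ y : ℂ, q.eval y = p.partialSum N y := by
    intro y
    rw [hq, FormalMultilinearSeries.partialSum]
    rw [Polynomial.eval_finset_sum]
    refine Finset.sum_congr rfl fun i hi => ?_
    rw [FormalMultilinearSeries.apply_eq_pow_smul_coeff, smul_eq_mul,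
      Polynomial.eval_mul, Polynomial.eval_C, Polynomial.eval_pow, Polynomial.eval_X]
    ring
  have hqg : ∀ z : ℂ, ‖z‖ ≤ r → ‖q.eval z - g z‖ ≤ ε/2 := by
    intro z hz
    have hzb : z ∈ ball (0:ℂ) (rn:ℝ) := by
      rw [mem_ball_zero_iff]; exact lt_of_le_of_lt hz hrr'
    have := hN z hzb
    rw [zero_add, dist_eq_norm] at this
    rw [hqe, ← norm_neg]
    simpa [neg_sub] using this.le
  obtain ⟨Q₀, hQ₀⟩ := ddI_polynomial q k
  refine ⟨MvPolynomial.bind₁ (fun i => MvPolynomial.C (r:ℂ) * MvPolynomial.X i) Q₀, ?_⟩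
  intro v hv
  set w : Fin (k+1) → ℂ := fun i => (r:ℂ) * v i with hw
  have hwn : ∀ i, ‖w i‖ ≤ r := by
    intro i
    rw [hw]
    calc ‖(r:ℂ) * v i‖ = r * ‖v i‖ := by
          rw [norm_mul, Complex.norm_real, Real.norm_eq_abs, abs_of_pos hr0]
      _ ≤ r * 1 := by gcongr; exact hv i
      _ = r := mul_one r
  have hvK : v ∈ K := by rw [hK, Set.mem_pi]; intro i _; rw [mem_closedBall_zero_iff]; exact hv i
  have hwK : w ∈ K := by
    rw [hK, Set.mem_pi]; intro i _; rw [mem_closedBall_zero_iff]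
    exact le_trans (hwn i) hr1.le
  have hdist : dist w v < δ := by
    refine lt_of_le_of_lt (dist_pi_le_iff hd0.le |>.mpr fun i => ?_) hdδ
    rw [dist_eq_norm, hw]
    have : (r:ℂ) * v i - v i = (((r - 1 : ℝ)) : ℂ) * v i := by push_cast; ring
    rw [this, norm_mul, Complex.norm_real, Real.norm_eq_abs, abs_of_nonpos (by simp [hr]; linarith)]
    calc (-(r-1)) * ‖v i‖ = d * ‖v i‖ := by rw [hr]; ring_nf
      _ ≤ d * 1 := by gcongr; exact hv i
      _ = d := mul_one d
  have hterm2 : dist (ddI k g w) (ddI k g v) < ε/2 := H w hwK v hvK hdist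
  have hterm1 : ‖MvPolynomial.eval w Q₀ - ddI k g w‖ ≤ ε/2 := by
    rw [← hQ₀ w, ← ddI_sub (q.continuous) hgc k w]
    exact ddI_norm_le (fun z hz => hqg z hz) k w hwn
  calc ‖MvPolynomial.eval v (MvPolynomial.bind₁
        (fun i => MvPolynomial.C (r:ℂ) * MvPolynomial.X i) Q₀) - ddI k g v‖
      = dist (MvPolynomial.eval w Q₀) (ddI k g v) := by
        rw [dd_eval_scale, dist_eq_norm, hw]
    _ ≤ dist (MvPolynomial.eval w Q₀) (ddI k g w) + dist (ddI k g w) (ddI k g v) := dist_triangle _ _ _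
    _ < ε/2 + ε/2 := by
        apply add_lt_add_of_le_of_lt _ hterm2
        rw [dist_eq_norm]; exact hterm1
    _ = ε := by ring

lemma dd_mem_norm {z : ℂ} (h : z ∈ unitDisk) : ‖z‖ ≤ 1 := by
  simpa [unitDisk, Metric.mem_closedBall, dist_zero_right] using h

lemma dd_norm_mem {z : ℂ} (h : ‖z‖ ≤ 1) : z ∈ unitDisk := by
  simpa [unitDisk, Metric.mem_closedBall, dist_zero_right] using h

end DDAux

/-- If `f ∈ A(𝔻)` with `f⁽ᵏ⁾ ∈ A(𝔻)` for `1 ≤ k ≤ n`, then for `1 ≤ k ≤ n`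
the divided difference `f^[k]` belongs to `A(𝔻^{k+1})` (uniform limit of polynomials in `k+1`
variables on the closed polydisk), and `sup_{𝔻̄^{k+1}} |f^[k]| ≤ c_k · sup_𝕋 |f⁽ᵏ⁾|` with a
constant `c_k` depending only on `k`. -/
theorem divided_difference_of_disk_algebra_function_in_polydisk_algebra
    (k : ℕ) (hk : 1 ≤ k) :
    ∃ c : ℝ, 0 < c ∧
      ∀ (n : ℕ) (f : ℂ → ℂ) (D : ℕ → ℂ → ℂ),
        k ≤ n → D 0 = f →
        DiskDerivChain D n →
        (∀ m ≤ n, MemDiskAlg (D m)) →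
        ∀ φ : (Fin (k+1) → ℂ) → ℂ, IsDivDiff unitDisk f k φ →
          (∃ P : ℕ → MvPolynomial (Fin (k+1)) ℂ,
            TendstoUniformlyOn (fun j v => MvPolynomial.eval v (P j)) φ Filter.atTop
              {v : Fin (k+1) → ℂ | ∀ i, v i ∈ unitDisk}) ∧
          ∀ M : ℝ, (∀ z ∈ unitCircleSet, ‖D k z‖ ≤ M) →
            ∀ v : Fin (k+1) → ℂ, (∀ i, v i ∈ unitDisk) → ‖φ v‖ ≤ c * M := by

  refine ⟨1, one_pos, ?_⟩
  intro n f D hkn hD0 hchain hmem φ hφ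
  set E : ℕ → ℂ → ℂ := fun m z => D m (ddRetr z) with hE
  have hEc : ∀ m, m ≤ k → Continuous (E m) := by
    intro m hm
    exact ((hmem m (le_trans hm hkn)).1).comp_continuous ddRetr_continuous
      (fun z => dd_norm_mem (ddRetr_norm_le z))
  have hEeq : ∀ m z, ‖z‖ ≤ 1 → E m z = D m z := by
    intro m z hz
    show D m (ddRetr z) = D m z
    rw [ddRetr_eq hz]
  have hEd : ∀ m, m < k → ∀ z ∈ Metric.ball (0:ℂ) 1, HasDerivAt (E m) (E (m+1) z) z := by
    intro m hm z hz
    have h1 := hchain m (lt_of_lt_of_le hm hkn) z hz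
    have h2 : E (m+1) z = D (m+1) z := hEeq (m+1) z (le_of_lt (mem_ball_zero_iff.mp hz))
    rw [h2]
    have h3 : E m =ᶠ[nhds z] D m := by
      filter_upwards [isOpen_ball.mem_nhds hz] with w hw
      exact hEeq m w (le_of_lt (mem_ball_zero_iff.mp hw))
    exact h1.congr_of_eventuallyEq h3
  have hIsDD : ∀ m, m ≤ k → IsDivDiff unitDisk f m (ddI m (E m)) := by
    intro m
    induction m with
    | zero =>
      intro _ v hv
      show E 0 (v 0) = f (v 0)
      rw [hEeq 0 (v 0) (dd_mem_norm (hv 0)), hD0]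
    | succ m ih =>
      intro hm
      refine ⟨ddI m (E m), ih (Nat.le_of_succ_le hm), ?_⟩
      intro v hv
      have hvm : ∀ i, ‖v i‖ ≤ 1 := fun i => dd_mem_norm (hv i)
      have hsnoc : Continuous fun lam : ℂ =>
          ddI (m+1) (E (m+1)) (Fin.snoc (fun i : Fin (m+1) => v i.castSucc) lam) := by
        apply (ddI_continuous (hEc (m+1) hm) (m+1)).comp
        apply continuous_pi
        intro i
        refine Fin.lastCases ?_ ?_ i
        · simp only [Fin.snoc_last]; exact continuous_id
        · intro j; simp only [Fin.snoc_castSucc]; exact continuous_const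
      have hself : Fin.snoc (fun i : Fin (m+1) => v i.castSucc) (v (Fin.last (m+1))) = v := by
        funext i
        refine Fin.lastCases ?_ ?_ i
        · rw [Fin.snoc_last]
        · intro j; rw [Fin.snoc_castSucc]
      have htarget : Filter.Tendsto (fun lam : ℂ =>
          ddI (m+1) (E (m+1)) (Fin.snoc (fun i : Fin (m+1) => v i.castSucc) lam))
          (nhdsWithin (v (Fin.last (m+1))) (unitDisk \ {v ((Fin.last m).castSucc)}))
          (nhds (ddI (m+1) (E (m+1)) v)) := by
        have h4 := hsnoc.tendsto (v (Fin.last (m+1)))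
        rw [hself] at h4
        exact h4.mono_left nhdsWithin_le_nhds
      apply Filter.Tendsto.congr' _ htarget
      filter_upwards [self_mem_nhdsWithin] with lam hlam
      have hlam1 : ‖lam‖ ≤ 1 := dd_mem_norm hlam.1
      have hne : lam - v ((Fin.last m).castSucc) ≠ 0 := by
        rw [sub_ne_zero]
        intro hc
        exact hlam.2 (by rw [hc]; exact rfl)
      have hxnorm : ∀ i, ‖(Fin.snoc (fun i : Fin (m+1) => v i.castSucc) lam : Fin (m+2) → ℂ) i‖ ≤ 1 := by
        intro i
        refine Fin.lastCases ?_ ?_ i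
        · rw [Fin.snoc_last]; exact hlam1
        · intro j; rw [Fin.snoc_castSucc]; exact hvm _
      have hkey := ddI_key (hEc (m+1) hm) (hEc m (Nat.le_of_succ_le hm))
        (hEd m (Nat.lt_of_succ_le hm)) m
        (Fin.snoc (fun i : Fin (m+1) => v i.castSucc) lam) hxnorm
      rw [Fin.snoc_last] at hkey
      have e1 : (Fin.snoc (fun i : Fin (m+1) => v i.castSucc) lam : Fin (m+2) → ℂ)
          ((Fin.last m).castSucc) = v ((Fin.last m).castSucc) := by
        rw [Fin.snoc_castSucc]
      have e2 : (fun i : Fin m =>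
          (Fin.snoc (fun i : Fin (m+1) => v i.castSucc) lam : Fin (m+2) → ℂ) i.castSucc.castSucc)
          = fun i : Fin m => v i.castSucc.castSucc := by
        funext i; rw [Fin.snoc_castSucc]
      have e3 : (fun i : Fin (m+1) =>
          (Fin.snoc (fun i : Fin (m+1) => v i.castSucc) lam : Fin (m+2) → ℂ) i.castSucc)
          = Fin.snoc (fun i : Fin m => v i.castSucc.castSucc) (v ((Fin.last m).castSucc)) := by
        funext i
        refine Fin.lastCases ?_ ?_ i
        · rw [Fin.snoc_last, Fin.snoc_castSucc]
        · intro j; rw [Fin.snoc_castSucc, Fin.snoc_castSucc]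
      rw [e1, e2, e3] at hkey
      rw [eq_comm, div_eq_iff hne]
      exact hkey.symm
  have hφeq : ∀ v : Fin (k+1) → ℂ, (∀ i, v i ∈ unitDisk) → φ v = ddI k (E k) v :=
    fun v hv => dd_unique k φ (ddI k (E k)) hφ (hIsDD k le_rfl) v hv
  constructor
  · have hEkc : Continuous (E k) := hEc k le_rfl
    have hEkd : DifferentiableOn ℂ (E k) (Metric.ball (0:ℂ) 1) := by
      intro z hz
      have h1 : DifferentiableAt ℂ (D k) z :=
        ((hmem k hkn).2 z hz).differentiableAt (isOpen_ball.mem_nhds hz)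
      have h2 : E k =ᶠ[nhds z] D k := by
        filter_upwards [isOpen_ball.mem_nhds hz] with w hw
        exact hEeq k w (le_of_lt (mem_ball_zero_iff.mp hw))
      exact (h1.congr_of_eventuallyEq h2).differentiableWithinAt
    have happrox : ∀ j : ℕ, ∃ Q : MvPolynomial (Fin (k+1)) ℂ, ∀ v : Fin (k+1) → ℂ,
        (∀ i, ‖v i‖ ≤ 1) → ‖MvPolynomial.eval v Q - ddI k (E k) v‖ < 1/(j+1) :=
      fun j => dd_poly_approx k hEkc hEkd (by positivity)
    choose P hP using happrox
    refine ⟨P, ?_⟩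
    rw [Metric.tendstoUniformlyOn_iff]
    intro ε hε
    obtain ⟨J, hJ⟩ := exists_nat_one_div_lt hε
    rw [Filter.eventually_atTop]
    refine ⟨J, fun j hj v hv => ?_⟩
    have hv' : ∀ i, v i ∈ unitDisk := hv
    have hvm : ∀ i, ‖v i‖ ≤ 1 := fun i => dd_mem_norm (hv' i)
    rw [dist_comm, dist_eq_norm, hφeq v hv']
    calc ‖MvPolynomial.eval v (P j) - ddI k (E k) v‖ < 1/(j+1) := hP j v hvm
      _ ≤ 1/(J+1) := by
          apply one_div_le_one_div_of_le (by positivity)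
          exact_mod_cast Nat.succ_le_succ hj
      _ < ε := hJ
  · intro M hM v hv
    have hvm : ∀ i, ‖v i‖ ≤ 1 := fun i => dd_mem_norm (hv i)
    have hMax : ∀ z : ℂ, ‖z‖ ≤ 1 → ‖D k z‖ ≤ M := by
      intro z hz
      have hDk := hmem k hkn
      have hcl : ContinuousOn (D k) (closure (Metric.ball (0:ℂ) 1)) := by
        rw [closure_ball (0:ℂ) one_ne_zero]; exact hDk.1
      apply Complex.norm_le_of_forall_mem_frontier_norm_le
        (isBounded_ball (x := (0:ℂ)) (r := 1)) ⟨hDk.2, hcl⟩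
      · intro w hw
        apply hM
        rw [frontier_ball (0:ℂ) one_ne_zero] at hw
        exact hw
      · rw [closure_ball (0:ℂ) one_ne_zero]
        exact mem_closedBall_zero_iff.mpr hz
    rw [hφeq v hv, one_mul]
    apply ddI_norm_le (R := 1) (B := M) (fun z hz => ?_) k v hvm
    rw [hEeq k z hz]
    exact hMax z hz
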